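/- Let θ ∈ (0, 1/2) and define the polynomial k(c) = 16c⁶θ⁴ − 48c⁴θ³(1−5θ+4θ²) − 24c³θ(1−13θ+52θ²−72θ³+32θ⁴) − 6c²(−2+50θ−296θ²+640θ³−584θ⁴+192θ⁵) − 24c(1−θ)²(−3+28θ−56θ²+32θ³) + 16(1−θ)³(6−17θ+12θ²). Then k(c) > 0 for every c ∈ ((1−θ)/θ, ∞). -/
import Mathlib


open Real

theorem growth_optimal_k_positive
    (θ : ℝ) (hθ : θ ∈ Set.Ioo (0:ℝ) (1/2)) :
    ∀ c ∈ Set.Ioi ((1 - θ)/θ),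
      16*c^6*θ^4 - 48*c^4*θ^3*(1 - 5*θ + 4*θ^2)
        - 24*c^3*θ*(1 - 13*θ + 52*θ^2 - 72*θ^3 + 32*θ^4)
        - 6*c^2*(-2 + 50*θ - 296*θ^2 + 640*θ^3 - 584*θ^4 + 192*θ^5)
        - 24*c*(1 - θ)^2*(-3 + 28*θ - 56*θ^2 + 32*θ^3)
        + 16*(1 - θ)^3*(6 - 17*θ + 12*θ^2) > 0 := by
  obtain ⟨hθ0, hθ2⟩ := hθ
  intro c hc
  rw [Set.mem_Ioi, div_lt_iff₀ hθ0] at hc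
  set a : ℝ := c*θ - (1 - θ) with ha_def
  have ha : 0 < a := by simp only [ha_def]; linarith
  have h1θ : 0 < 1 - θ := by linarith
  have h1 : 0 < 180 - 540*θ + 552*θ^2 - 192*θ^3 := by nlinarith
  have h2 : 0 < 296 - 840*θ + 864*θ^2 - 320*θ^3 := by nlinarith
  have h3 : 0 < 240 - 528*θ + 480*θ^2 - 192*θ^3 := by nlinarith
  have key : θ^6 * (16*c^6*θ^4 - 48*c^4*θ^3*(1 - 5*θ + 4*θ^2)
        - 24*c^3*θ*(1 - 13*θ + 52*θ^2 - 72*θ^3 + 32*θ^4)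
        - 6*c^2*(-2 + 50*θ - 296*θ^2 + 640*θ^3 - 584*θ^4 + 192*θ^5)
        - 24*c*(1 - θ)^2*(-3 + 28*θ - 56*θ^2 + 32*θ^3)
        + 16*(1 - θ)^3*(6 - 17*θ + 12*θ^2))
      = θ^4 * ((1-θ)^3*(4 + 48*a)
          + a^2*(180 - 540*θ + 552*θ^2 - 192*θ^3)
          + a^3*(296 - 840*θ + 864*θ^2 - 320*θ^3)
          + a^4*(240 - 528*θ + 480*θ^2 - 192*θ^3)
          + 96*a^5*(1-θ) + 16*a^6) := by
    simp only [ha_def]; ring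
  have hRHS : 0 < θ^4 * ((1-θ)^3*(4 + 48*a)
          + a^2*(180 - 540*θ + 552*θ^2 - 192*θ^3)
          + a^3*(296 - 840*θ + 864*θ^2 - 320*θ^3)
          + a^4*(240 - 528*θ + 480*θ^2 - 192*θ^3)
          + 96*a^5*(1-θ) + 16*a^6) := by positivity
  have h6 : 0 < θ^6 := by positivity
  nlinarith [key, hRHS, h6, mul_pos h6 hRHS]
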